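/- arXiv:math/0609749 — 2 statements merged into one kernel-verified Lean document; each statement's English description precedes it below -/
import Mathlib

section
/- Fix a prime p, a positive integer n, and a positive integer r. The map sending a plane partition (λ_{jk}) of n with at most r nonzero rows to the sequence of groups G_j := (ℤ/pℤ)^{λ_{j1}−λ_{j2}} ⊕ (ℤ/p²ℤ)^{λ_{j2}−λ_{j3}} ⊕ ⋯ ⊕ (ℤ/p^nℤ)^{λ_{jn}}, for j = 1, …, r, is a bijection between the set of plane partitions of n with at most r nonzero rows and the set of pairs (G, (G_j)) where G is an isomorphism class of abelian groups of order p^n and (G_j) is a group-partition of G with at most r factors. -/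
open scoped ENat

/-- A plane partition of `n`: a doubly indexed family of nonnegative integers, weakly
decreasing along each row and column, with finite support and total sum `n`. -/
structure PlanePartition (n : ℕ) where
  part : ℕ → ℕ → ℕ
  decr_row : ∀ j k, part j (k + 1) ≤ part j k
  decr_col : ∀ j k, part (j + 1) k ≤ part j k
  finite : (Function.support fun x : ℕ × ℕ => part x.1 x.2).Finite
  sum_eq : ∑ᶠ (j : ℕ) (k : ℕ), part j k = n

/-- `PL_r(n)`: the number of plane partitions of `n` with at most `r` nonzero rows
(rows are indexed from `0`, so "at most `r` nonzero rows" means row `j` vanishes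
whenever `r ≤ j`); `r = ⊤` counts all plane partitions. -/
noncomputable def planePartitionCount (r : ℕ∞) (n : ℕ) : ℕ :=
  Nat.card {P : PlanePartition n // ∀ j : ℕ, r ≤ (j : ℕ∞) → ∀ k, P.part j k = 0}

/-- An (ordered) `r`-tuple of abelian groups `(G₁, …, G_r)`, possibly with trivial entries. -/
structure GroupTuple (r : ℕ) : Type 1 where
  factor : Fin r → Type
  [grp : ∀ j, AddCommGroup (factor j)]

attribute [instance] GroupTuple.grp

/-- Componentwise isomorphism: two tuples represent the same sequence of isomorphism
classes. -/
def GroupTuple.Rel {r : ℕ} (t u : GroupTuple r) : Prop :=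
  ∀ j, Nonempty (t.factor j ≃+ u.factor j)

/-- The tuple `(G₁, …, G_r)` associated to a plane partition `λ`, where (with rows and
columns indexed from `0`) `G_{j+1} = (ℤ/pℤ)^{λ_{j0}−λ_{j1}} ⊕ (ℤ/p²ℤ)^{λ_{j1}−λ_{j2}} ⊕ ⋯
⊕ (ℤ/pⁿℤ)^{λ_{j,n-1}}`. -/
def planePartitionToTuple (p n r : ℕ) (P : PlanePartition n) : GroupTuple r :=
  ⟨fun j : Fin r => (k : Fin n) →
    (Fin (P.part j k - P.part j ((k : ℕ) + 1)) → ZMod (p ^ ((k : ℕ) + 1)))⟩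


variable {G H : Type*} [AddCommGroup G] [AddCommGroup H]

/-- The subgroup of elements of `p^m G` killed by `p`. -/
def Sgrp (p m : ℕ) (G : Type*) [AddCommGroup G] : AddSubgroup G where
  carrier := {x | p • x = 0 ∧ ∃ y : G, p ^ m • y = x}
  zero_mem' := ⟨smul_zero _, 0, smul_zero _⟩
  add_mem' := by
    rintro a b ⟨ha1, y, hy⟩ ⟨hb1, z, hz⟩
    exact ⟨by rw [smul_add, ha1, hb1, add_zero], y + z, by rw [smul_add, hy, hz]⟩
  neg_mem' := by
    rintro a ⟨ha1, y, hy⟩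
    exact ⟨by rw [smul_neg, ha1, neg_zero], -y, by rw [smul_neg, hy]⟩

theorem mem_Sgrp {p m : ℕ} {x : G} : x ∈ Sgrp p m G ↔ p • x = 0 ∧ ∃ y : G, p ^ m • y = x :=
  Iff.rfl

theorem Sgrp_card_congr (p m : ℕ) (e : G ≃+ H) :
    Nat.card (Sgrp p m G) = Nat.card (Sgrp p m H) := by
  refine Nat.card_congr ⟨fun x => ⟨e x.1, ?_⟩, fun x => ⟨e.symm x.1, ?_⟩, fun x => ?_, fun x => ?_⟩
  · obtain ⟨h1, y, hy⟩ := x.2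
    exact ⟨by rw [← map_nsmul, h1, map_zero], e y, by rw [← map_nsmul, hy]⟩
  · obtain ⟨h1, y, hy⟩ := x.2
    exact ⟨by rw [← map_nsmul, h1, map_zero], e.symm y, by rw [← map_nsmul, hy]⟩
  · exact Subtype.ext (e.symm_apply_apply _)
  · exact Subtype.ext (e.apply_symm_apply _)

theorem Sgrp_card_le_of_inj (p m : ℕ) [Finite H] (f : G →+ H) (hf : Function.Injective f) :
    Nat.card (Sgrp p m G) ≤ Nat.card (Sgrp p m H) := by
  refine Nat.card_le_card_of_injective
    (fun x => (⟨f x.1, ?_⟩ : Sgrp p m H)) (fun a b hab => ?_)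
  · obtain ⟨h1, y, hy⟩ := x.2
    exact ⟨by rw [← map_nsmul, h1, map_zero], f y, by rw [← map_nsmul, hy]⟩
  · exact Subtype.ext (hf (congrArg Subtype.val hab))

theorem Sgrp_card_antitone (p m : ℕ) [Finite G] :
    Nat.card (Sgrp p (m + 1) G) ≤ Nat.card (Sgrp p m G) := by
  refine Nat.card_le_card_of_injective (fun x => (⟨x.1, ?_⟩ : Sgrp p m G)) (fun a b hab => Subtype.ext (Subtype.mk_eq_mk.mp hab))
  obtain ⟨h1, y, hy⟩ := x.2
  exact ⟨h1, p • y, by rw [smul_smul, ← pow_succ, hy]⟩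

theorem Sgrp_card_pi {ι : Type*} [Fintype ι] (p m : ℕ) (M : ι → Type*)
    [∀ i, AddCommGroup (M i)] :
    Nat.card (Sgrp p m (∀ i, M i)) = ∏ i, Nat.card (Sgrp p m (M i)) := by
  rw [← Nat.card_pi]
  refine Nat.card_congr ⟨fun x i => ⟨x.1 i, ?_, ?_⟩, fun y => ⟨fun i => (y i).1, ?_, ?_⟩,
    fun x => rfl, fun y => rfl⟩
  · exact congrFun x.2.1 i
  · obtain ⟨z, hz⟩ := x.2.2
    exact ⟨z i, congrFun hz i⟩
  · exact funext fun i => (y i).2.1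
  · exact ⟨fun i => (y i).2.2.choose, funext fun i => (y i).2.2.choose_spec⟩


theorem Sgrp_eq_bot {p : ℕ} (hp : 1 < p) (m e : ℕ) (h : e ≤ m) :
    ∀ x : ZMod (p ^ e), (p • x = 0 ∧ ∃ y, p ^ m • y = x) → x = 0 := by
  rintro x ⟨h1, y, rfl⟩
  have : p ^ m = p ^ (m - e) * p ^ e := by rw [← pow_add]; congr 1; omega
  rw [this, mul_smul]
  have : (p ^ e) • y = 0 := by
    rw [nsmul_eq_mul, ZMod.natCast_self, zero_mul]
  rw [this, smul_zero]

theorem Sgrp_card_zmod {p : ℕ} (hp : p.Prime) (m e : ℕ) :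
    Nat.card (Sgrp p m (ZMod (p ^ e))) = if m < e then p else 1 := by
  have hpe : p ^ e ≠ 0 := pow_ne_zero _ hp.ne_zero
  haveI : NeZero (p ^ e) := ⟨hpe⟩
  by_cases h : m < e
  · rw [if_pos h]
    have he1 : e - 1 + 1 = e := by omega
    have hm : m ≤ e - 1 := by omega
    have hkey : Sgrp p m (ZMod (p ^ e)) =
        AddSubgroup.zmultiples ((p ^ (e - 1) : ℕ) : ZMod (p ^ e)) := by
      ext x
      rw [mem_Sgrp, AddSubgroup.mem_zmultiples_iff]
      constructor
      · rintro ⟨h1, y, hy⟩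
        have hx : ((x.val : ℕ) : ZMod (p ^ e)) = x := ZMod.natCast_zmod_val x
        have h2 : ((p * x.val : ℕ) : ZMod (p ^ e)) = 0 := by
          push_cast
          rw [hx, ← nsmul_eq_mul, h1]
        rw [ZMod.natCast_eq_zero_iff] at h2
        have h3 : p ^ (e - 1) ∣ x.val := by
          have : p * p ^ (e - 1) ∣ p * x.val := by
            rw [← pow_succ', he1]; exact h2
          exact (mul_dvd_mul_iff_left (by exact_mod_cast hp.pos.ne' : p ≠ 0)).mp this
        obtain ⟨c, hc⟩ := h3
        refine ⟨(c : ℤ), ?_⟩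
        have : ((p ^ (e - 1) * c : ℕ) : ZMod (p ^ e)) = x := by rw [← hc, hx]
        rw [← this]
        push_cast
        rw [zsmul_eq_mul]
        push_cast
        ring
      · rintro ⟨k, rfl⟩
        constructor
        · rw [smul_comm]
          have : p • ((p ^ (e - 1) : ℕ) : ZMod (p ^ e)) = 0 := by
            rw [nsmul_eq_mul, ← Nat.cast_mul, ← pow_succ', he1, ZMod.natCast_self]
          rw [this, smul_zero]
        · refine ⟨k • ((p ^ (e - 1 - m) : ℕ) : ZMod (p ^ e)), ?_⟩
          rw [smul_comm]
          congr 1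
          rw [nsmul_eq_mul, ← Nat.cast_mul, ← pow_add]
          congr 2
          omega
    rw [hkey, Nat.card_zmultiples, ZMod.addOrderOf_coe _ hpe,
      Nat.gcd_eq_right (pow_dvd_pow p (Nat.sub_le e 1)),
      Nat.pow_div (Nat.sub_le e 1) hp.pos]
    have : e - (e - 1) = 1 := by omega
    rw [this, pow_one]
  · rw [if_neg h]
    have : Sgrp p m (ZMod (p ^ e)) = ⊥ := by
      rw [eq_bot_iff]
      intro x hx
      rw [AddSubgroup.mem_bot]
      exact Sgrp_eq_bot hp.one_lt m e (by omega) x hx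
    rw [this, AddSubgroup.card_bot]


/-- Reindexing a dependent product of additive groups along an equivalence. -/
def piCongrLeftAux {ι κ : Type*} (M : ι → Type*) [∀ i, AddCommMonoid (M i)] (e : ι ≃ κ) :
    (∀ i, M i) ≃+ ∀ k, M (e.symm k) :=
  { Equiv.piCongrLeft' M e with map_add' := fun _ _ => rfl }

/-- Currying for sigma-indexed products of additive groups. -/
def piCurryAux {α : Type*} {β : α → Type*} (γ : ∀ a, β a → Type*)
    [∀ a b, AddCommMonoid (γ a b)] :
    (∀ x : Σ i, β i, γ x.1 x.2) ≃+ ∀ a b, γ a b :=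
  { Equiv.piCurry γ with map_add' := fun _ _ => rfl }

/-- Dropping subsingleton factors from a product. -/
def piSubtypeEquiv {ι : Type*} (M : ι → Type*) [∀ i, AddCommMonoid (M i)] (q : ι → Prop)
    [DecidablePred q] (h : ∀ i, ¬q i → Subsingleton (M i)) :
    (∀ i, M i) ≃+ ∀ i : { i // q i }, M i.1 where
  toFun x i := x i.1
  invFun y i := if hi : q i then y ⟨i, hi⟩ else 0
  left_inv x := funext fun i => by
    by_cases hi : q i
    · simp [hi]
    · haveI := h i hi; exact Subsingleton.elim _ _
  right_inv y := funext fun i => by simp [i.2]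
  map_add' _ _ := rfl

def zmodCastEq {a b : ℕ} (h : a = b) : ZMod a ≃+ ZMod b := by subst h; exact AddEquiv.refl _

/-- The canonical form `∏ₖ (ℤ/p^(k+1))^(a k)` of the model group `∏ᵢ ℤ/p^(ν i)`. -/
noncomputable def modelEquiv {ι : Type} [Fintype ι] (p n : ℕ) (ν : ι → ℕ) (hν : ∀ i, ν i ≤ n)
    (a : Fin n → ℕ) (ha : ∀ k : Fin n, a k = Fintype.card { i // ν i = (k : ℕ) + 1 }) :
    ((k : Fin n) → Fin (a k) → ZMod (p ^ ((k : ℕ) + 1))) ≃+ ∀ i, ZMod (p ^ ν i) := by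
  classical
  refine AddEquiv.symm ?_
  have e1 : (∀ i, ZMod (p ^ ν i)) ≃+ ∀ i : { i // 1 ≤ ν i }, ZMod (p ^ ν i.1) :=
    piSubtypeEquiv _ _ (fun i hi => by
      rw [show ν i = 0 by omega, pow_zero]; infer_instance)
  set f : { i // 1 ≤ ν i } → Fin n := fun x => ⟨ν x.1 - 1, by have := hν x.1; have := x.2; omega⟩
    with hf
  let E : { i // 1 ≤ ν i } ≃ Σ k : Fin n, { x : { i // 1 ≤ ν i } // f x = k } :=
    (Equiv.sigmaFiberEquiv f).symm
  have e2 : (∀ i : { i // 1 ≤ ν i }, ZMod (p ^ ν i.1)) ≃+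
      ∀ y : Σ k : Fin n, { x : { i // 1 ≤ ν i } // f x = k }, ZMod (p ^ ν (E.symm y).1) :=
    piCongrLeftAux (fun x : { i // 1 ≤ ν i } => ZMod (p ^ ν x.1)) E
  have e3 : (∀ y : Σ k : Fin n, { x : { i // 1 ≤ ν i } // f x = k },
      ZMod (p ^ ν (E.symm y).1)) ≃+
      ∀ y : Σ k : Fin n, { x : { i // 1 ≤ ν i } // f x = k }, ZMod (p ^ ((y.1 : ℕ) + 1)) := by
    refine AddEquiv.piCongrRight fun y => zmodCastEq ?_
    have h2 := congrArg Fin.val y.2.2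
    have h3 := y.2.1.2
    have : (E.symm y).1 = y.2.1.1 := by
      simp only [E, Equiv.symm_symm, Equiv.sigmaFiberEquiv_apply]
    rw [this]
    congr 1
    simp only [hf] at h2
    omega
  have e4 : (∀ y : Σ k : Fin n, { x : { i // 1 ≤ ν i } // f x = k },
      ZMod (p ^ ((y.1 : ℕ) + 1))) ≃+
      ∀ k : Fin n, ∀ _ : { x : { i // 1 ≤ ν i } // f x = k }, ZMod (p ^ ((k : ℕ) + 1)) :=
    piCurryAux fun (k : Fin n) (_ : { x : { i // 1 ≤ ν i } // f x = k }) =>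
      ZMod (p ^ ((k : ℕ) + 1))
  have e5 : ∀ k : Fin n, ({ x : { i // 1 ≤ ν i } // f x = k } → ZMod (p ^ ((k : ℕ) + 1))) ≃+
      (Fin (a k) → ZMod (p ^ ((k : ℕ) + 1))) := by
    intro k
    have hcard : Fintype.card { x : { i // 1 ≤ ν i } // f x = k } = a k := by
      rw [ha k]
      refine Fintype.card_congr ⟨fun x => ⟨x.1.1, ?_⟩, fun i => ⟨⟨i.1, by omega⟩, ?_⟩, ?_, ?_⟩
      · have h2 := congrArg Fin.val x.2
        have h3 := x.1.2
        simp only [hf] at h2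
        omega
      · have h2 := i.2
        exact Fin.ext (by simp only [hf]; omega)
      · intro x; exact Subtype.ext (Subtype.ext rfl)
      · intro i; exact Subtype.ext rfl
    exact piCongrLeftAux (fun _ => ZMod (p ^ ((k : ℕ) + 1)))
      (Fintype.equivFinOfCardEq hcard)
  exact e1.trans (e2.trans (e3.trans (e4.trans (AddEquiv.piCongrRight e5))))


/-- The natural injection `ℤ/p^d → ℤ/p^e` for `d ≤ e`, sending `1` to `p^(e-d)`. -/
noncomputable def zmodInj (p : ℕ) {d e : ℕ} (hde : d ≤ e) :
    ZMod (p ^ d) →+ ZMod (p ^ e) :=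
  ZMod.lift (p ^ d) ⟨zmultiplesHom (ZMod (p ^ e)) ((p ^ (e - d) : ℕ) : ZMod (p ^ e)), by
    show ((p ^ d : ℕ) : ℤ) • ((p ^ (e - d) : ℕ) : ZMod (p ^ e)) = 0
    rw [natCast_zsmul, nsmul_eq_mul, ← Nat.cast_mul, ← pow_add,
      show d + (e - d) = e by omega, ZMod.natCast_self]⟩

theorem zmodInj_injective {p : ℕ} (hp : p.Prime) {d e : ℕ} (hde : d ≤ e) :
    Function.Injective (zmodInj p hde) := by
  haveI : NeZero (p ^ d) := ⟨pow_ne_zero _ hp.ne_zero⟩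
  rw [injective_iff_map_eq_zero]
  intro x hx
  have hxv : ((x.val : ℤ) : ZMod (p ^ d)) = x := by
    push_cast
    exact ZMod.natCast_zmod_val x
  have hx2 : zmodInj p hde (((x.val : ℤ) : ZMod (p ^ d))) =
      ((x.val * p ^ (e - d) : ℕ) : ZMod (p ^ e)) := by
    rw [zmodInj, ZMod.lift_coe]
    show ((x.val : ℕ) : ℤ) • ((p ^ (e - d) : ℕ) : ZMod (p ^ e)) = _
    rw [natCast_zsmul, nsmul_eq_mul, ← Nat.cast_mul]
  rw [hxv] at hx2
  rw [hx2, ZMod.natCast_eq_zero_iff] at hx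
  have hdvd : p ^ d ∣ x.val := by
    have h3 : p ^ d * p ^ (e - d) ∣ x.val * p ^ (e - d) := by
      rw [← pow_add, show d + (e - d) = e by omega]; exact hx
    exact (Nat.mul_dvd_mul_iff_right (pow_pos hp.pos _)).mp h3
  exact (ZMod.val_eq_zero x).mp (Nat.eq_zero_of_dvd_of_lt hdvd (ZMod.val_lt x))


noncomputable def piZmodInj (p : ℕ) {ι : Type*} {ν' ν : ι → ℕ} (h : ∀ i, ν' i ≤ ν i) :
    (∀ i, ZMod (p ^ ν' i)) →+ ∀ i, ZMod (p ^ ν i) where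
  toFun x i := zmodInj p (h i) (x i)
  map_zero' := funext fun i => map_zero _
  map_add' x y := funext fun i => map_add _ _ _

theorem piZmodInj_injective {p : ℕ} (hp : p.Prime) {ι : Type*} {ν' ν : ι → ℕ}
    (h : ∀ i, ν' i ≤ ν i) : Function.Injective (piZmodInj p h) := fun x y hxy =>
  funext fun i => zmodInj_injective hp (h i) (congrFun hxy i)

theorem card_Sgrp_model {ι : Type*} [Fintype ι] {p : ℕ} (hp : p.Prime) (ν : ι → ℕ) (m : ℕ) :
    Nat.card (Sgrp p m (∀ i, ZMod (p ^ ν i))) =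
      p ^ (Finset.univ.filter fun i => m < ν i).card := by
  classical
  rw [Sgrp_card_pi]
  rw [Finset.prod_congr rfl (fun i _ => Sgrp_card_zmod hp m (ν i)),
    Finset.prod_ite, Finset.prod_const, Finset.prod_const, one_pow, mul_one]

theorem card_model {ι : Type*} [Fintype ι] (p : ℕ) (ν : ι → ℕ) :
    Nat.card (∀ i, ZMod (p ^ ν i)) = p ^ ∑ i, ν i := by
  rw [Nat.card_pi]
  simp only [Nat.card_zmod]
  rw [Finset.prod_pow_eq_pow_sum]


/-- The conjugate (column heights) of a decreasing row `lam` truncated to `n`. -/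
def conj (n : ℕ) (lam : ℕ → ℕ) (i : ℕ) : ℕ := ((Finset.range n).filter fun k => i < lam k).card

theorem conj_le_iff {n : ℕ} {lam : ℕ → ℕ} (hmono : ∀ k, lam (k + 1) ≤ lam k)
    (hvan : ∀ k, n ≤ k → lam k = 0) (i k : ℕ) : k + 1 ≤ conj n lam i ↔ i < lam k := by
  have hanti : ∀ k1 k2, k1 ≤ k2 → lam k2 ≤ lam k1 := fun k1 k2 h =>
    antitone_nat_of_succ_le hmono h
  constructor
  · intro h
    by_contra hc
    push_neg at hc
    have hsub : (Finset.range n).filter (fun k' => i < lam k') ⊆ Finset.range k := by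
      intro k' hk'
      simp only [Finset.mem_filter, Finset.mem_range] at *
      rcases Nat.lt_or_ge k' k with h2 | h2
      · exact h2
      · exact absurd (le_trans (hanti k k' h2) hc) (by omega)
    have := Finset.card_le_card hsub
    rw [Finset.card_range] at this
    unfold conj at h
    omega
  · intro h
    have hkn : k < n := by
      by_contra h2
      push_neg at h2
      rw [hvan k h2] at h
      omega
    have hsub : Finset.range (k + 1) ⊆ (Finset.range n).filter fun k' => i < lam k' := by
      intro k' hk'
      simp only [Finset.mem_range] at hk'
      simp only [Finset.mem_filter, Finset.mem_range]
      exact ⟨by omega, lt_of_lt_of_le h (hanti k' k (by omega))⟩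
    have := Finset.card_le_card hsub
    rw [Finset.card_range] at this
    unfold conj
    omega

theorem conj_le (n : ℕ) (lam : ℕ → ℕ) (i : ℕ) : conj n lam i ≤ n :=
  le_trans (Finset.card_filter_le _ _) (by rw [Finset.card_range])

theorem conj_eq_iff {n : ℕ} {lam : ℕ → ℕ} (hmono : ∀ k, lam (k + 1) ≤ lam k)
    (hvan : ∀ k, n ≤ k → lam k = 0) (i k : ℕ) :
    conj n lam i = k + 1 ↔ lam (k + 1) ≤ i ∧ i < lam k := by
  have h1 := conj_le_iff hmono hvan i k
  have h2 := conj_le_iff hmono hvan i (k + 1)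
  omega

theorem filter_univ_fin (n : ℕ) (P : ℕ → Prop) [DecidablePred P] :
    (Finset.univ.filter fun i : Fin n => P i.1).card = ((Finset.range n).filter P).card := by
  rw [Finset.card_filter, Finset.card_filter,
    Fin.sum_univ_eq_sum_range (fun i => if P i then 1 else 0)]

theorem card_subtype_fin (n : ℕ) (P : ℕ → Prop) [DecidablePred P] :
    Fintype.card {i : Fin n // P i.1} = ((Finset.range n).filter P).card := by
  rw [Fintype.card_subtype, filter_univ_fin]

theorem card_fiber_eq {n : ℕ} {lam : ℕ → ℕ} (hmono : ∀ k, lam (k + 1) ≤ lam k)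
    (hvan : ∀ k, n ≤ k → lam k = 0) (hle : ∀ k, lam k ≤ n) (k : ℕ) :
    Fintype.card {i : Fin n // conj n lam i.1 = k + 1} = lam k - lam (k + 1) := by
  rw [card_subtype_fin n (fun i => conj n lam i = k + 1)]
  have : (Finset.range n).filter (fun i => conj n lam i = k + 1) =
      Finset.Ico (lam (k + 1)) (lam k) := by
    ext i
    simp only [Finset.mem_filter, Finset.mem_range, Finset.mem_Ico,
      conj_eq_iff hmono hvan]
    have := hle k
    omega
  rw [this, Nat.card_Ico]

theorem card_lt_conj_eq {n : ℕ} {lam : ℕ → ℕ} (hmono : ∀ k, lam (k + 1) ≤ lam k)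
    (hvan : ∀ k, n ≤ k → lam k = 0) (hle : ∀ k, lam k ≤ n) (m : ℕ) :
    (Finset.univ.filter fun i : Fin n => m < conj n lam i.1).card = lam m := by
  rw [filter_univ_fin n (fun i => m < conj n lam i)]
  have h1 : (Finset.range n).filter (fun i => m < conj n lam i) =
      (Finset.range n).filter fun i => i < lam m := by
    ext i
    have := conj_le_iff hmono hvan i m
    simp only [Finset.mem_filter, Finset.mem_range]
    omega
  have h2 : (Finset.range n).filter (fun i => i < lam m) = Finset.range (lam m) := by
    ext i
    have := hle m
    simp only [Finset.mem_filter, Finset.mem_range]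
    omega
  rw [h1, h2, Finset.card_range]

theorem double_count {ι : Type*} [Fintype ι] [DecidableEq ι] (n : ℕ) (ν : ι → ℕ)
    (hν : ∀ i, ν i ≤ n) :
    ∑ k ∈ Finset.range n, (Finset.univ.filter fun i => k < ν i).card = ∑ i, ν i := by
  classical
  simp_rw [Finset.card_filter]
  rw [Finset.sum_comm]
  refine Finset.sum_congr rfl fun i _ => ?_
  have : (Finset.range n).filter (fun k => k < ν i) = Finset.range (ν i) := by
    ext k
    have := hν i
    simp only [Finset.mem_filter, Finset.mem_range]
    omega
  rw [← Finset.card_filter, this, Finset.card_range]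

theorem double_count' (n : ℕ) (lam : ℕ → ℕ) (hle : ∀ k, lam k ≤ n) :
    ∑ i ∈ Finset.range n, conj n lam i = ∑ k ∈ Finset.range n, lam k := by
  unfold conj
  simp_rw [Finset.card_filter]
  rw [Finset.sum_comm]
  refine Finset.sum_congr rfl fun k _ => ?_
  have : (Finset.range n).filter (fun i => i < lam k) = Finset.range (lam k) := by
    ext i
    have := hle k
    simp only [Finset.mem_filter, Finset.mem_range]
    omega
  rw [← Finset.card_filter, this, Finset.card_range]


theorem finsum_finsum_eq_sum (f : ℕ → ℕ → ℕ) (a b : ℕ)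
    (h : ∀ j k, f j k ≠ 0 → j < a ∧ k < b) :
    ∑ᶠ (j) (k), f j k = ∑ j ∈ Finset.range a, ∑ k ∈ Finset.range b, f j k := by
  have h1 : ∀ j, ∑ᶠ k, f j k = ∑ k ∈ Finset.range b, f j k := by
    intro j
    refine finsum_eq_sum_of_support_subset _ fun k hk => ?_
    simp only [Finset.coe_range, Set.mem_Iio]
    exact (h j k hk).2
  have h2 : ∑ᶠ j, (∑ᶠ k, f j k) = ∑ j ∈ Finset.range a, ∑ᶠ k, f j k := by
    refine finsum_eq_sum_of_support_subset _ fun j hj => ?_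
    simp only [Finset.coe_range, Set.mem_Iio]
    rw [Function.mem_support, h1 j] at hj
    obtain ⟨k, hk, hne⟩ := Finset.exists_ne_zero_of_sum_ne_zero hj
    exact (h j k hne).1
  rw [h2]
  exact Finset.sum_congr rfl fun j _ => h1 j

namespace PlanePartition

variable {n : ℕ} (P : PlanePartition n)

theorem row_antitone {j k k' : ℕ} (h : k ≤ k') : P.part j k' ≤ P.part j k :=
  antitone_nat_of_succ_le (P.decr_row j) h

theorem col_antitone {j j' k : ℕ} (h : j ≤ j') : P.part j' k ≤ P.part j k :=
  antitone_nat_of_succ_le (f := fun j => P.part j k) (fun j => P.decr_col j k) h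

theorem exists_bound : ∃ N, ∀ j k, P.part j k ≠ 0 → j < N ∧ k < N := by
  refine ⟨(P.finite.toFinset.sup fun x => max x.1 x.2) + 1, fun j k hne => ?_⟩
  have hmem : (j, k) ∈ P.finite.toFinset := by
    rw [Set.Finite.mem_toFinset]
    exact hne
  have := Finset.le_sup (f := fun x : ℕ × ℕ => max x.1 x.2) hmem
  simp only [max_le_iff] at this
  omega

theorem sum_rect {a b : ℕ} (h : ∀ j k, P.part j k ≠ 0 → j < a ∧ k < b) :
    ∑ j ∈ Finset.range a, ∑ k ∈ Finset.range b, P.part j k = n := by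
  rw [← finsum_finsum_eq_sum _ _ _ h]
  exact P.sum_eq

theorem part_le (j k : ℕ) : P.part j k ≤ n := by
  obtain ⟨N, hN⟩ := P.exists_bound
  by_cases hz : P.part j k = 0
  · omega
  obtain ⟨hj, hk⟩ := hN j k hz
  have hsum := P.sum_rect hN
  calc P.part j k ≤ ∑ k' ∈ Finset.range N, P.part j k' :=
        Finset.single_le_sum (fun _ _ => Nat.zero_le _) (Finset.mem_range.mpr hk)
    _ ≤ ∑ j' ∈ Finset.range N, ∑ k' ∈ Finset.range N, P.part j' k' :=
        Finset.single_le_sum (f := fun j' => ∑ k' ∈ Finset.range N, P.part j' k')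
          (fun _ _ => Nat.zero_le _) (Finset.mem_range.mpr hj)
    _ = n := hsum

theorem part_eq_zero_of_le {j k : ℕ} (hk : n ≤ k) : P.part j k = 0 := by
  by_contra hne
  obtain ⟨N, hN⟩ := P.exists_bound
  obtain ⟨hj, hkN⟩ := hN j k hne
  have hsum := P.sum_rect hN
  have hpos : ∀ k' ∈ Finset.range (k + 1), 1 ≤ P.part j k' := fun k' hk' =>
    lt_of_lt_of_le (Nat.pos_of_ne_zero hne) (P.row_antitone (by
      simp only [Finset.mem_range] at hk'; omega))
  have h1 : k + 1 ≤ ∑ k' ∈ Finset.range (k + 1), P.part j k' := by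
    calc k + 1 = ∑ _k' ∈ Finset.range (k + 1), 1 := by simp
      _ ≤ _ := Finset.sum_le_sum hpos
  have h2 : ∑ k' ∈ Finset.range (k + 1), P.part j k' ≤
      ∑ k' ∈ Finset.range N, P.part j k' :=
    Finset.sum_le_sum_of_subset (Finset.range_subset_range.mpr (by omega))
  have h3 : ∑ k' ∈ Finset.range N, P.part j k' ≤
      ∑ j' ∈ Finset.range N, ∑ k' ∈ Finset.range N, P.part j' k' :=
    Finset.single_le_sum (f := fun j' => ∑ k' ∈ Finset.range N, P.part j' k')
      (fun _ _ => Nat.zero_le _) (Finset.mem_range.mpr hj)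
  omega

theorem sum_rect_rn {r : ℕ} (hvan : ∀ j, r ≤ j → ∀ k, P.part j k = 0) :
    ∑ j ∈ Finset.range r, ∑ k ∈ Finset.range n, P.part j k = n := by
  obtain ⟨N, hN⟩ := P.exists_bound
  set M := N + r + n with hM
  have hNM : ∀ j k, P.part j k ≠ 0 → j < M ∧ k < M := fun j k hne => by
    have := hN j k hne; omega
  have hsum := P.sum_rect hNM
  have houter : ∑ j ∈ Finset.range r, ∑ k ∈ Finset.range M, P.part j k =
      ∑ j ∈ Finset.range M, ∑ k ∈ Finset.range M, P.part j k := by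
    refine Finset.sum_subset (Finset.range_subset_range.mpr (by omega)) fun j _ hj => ?_
    simp only [Finset.mem_range, not_lt] at hj
    exact Finset.sum_eq_zero fun k _ => hvan j hj k
  have hinner : ∀ j, ∑ k ∈ Finset.range n, P.part j k =
      ∑ k ∈ Finset.range M, P.part j k := fun j => by
    refine Finset.sum_subset (Finset.range_subset_range.mpr (by omega)) fun k _ hk => ?_
    simp only [Finset.mem_range, not_lt] at hk
    exact P.part_eq_zero_of_le hk
  calc ∑ j ∈ Finset.range r, ∑ k ∈ Finset.range n, P.part j k
      = ∑ j ∈ Finset.range r, ∑ k ∈ Finset.range M, P.part j k :=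
        Finset.sum_congr rfl fun j _ => hinner j
    _ = ∑ j ∈ Finset.range M, ∑ k ∈ Finset.range M, P.part j k := houter
    _ = n := hsum

end PlanePartition


theorem count_diff {ι : Type*} [Fintype ι] (ν : ι → ℕ) (k : ℕ) :
    (Finset.univ.filter fun i => k < ν i).card - (Finset.univ.filter fun i => k + 1 < ν i).card
      = Fintype.card {i // ν i = k + 1} := by
  classical
  rw [Fintype.card_subtype]
  have hsub : (Finset.univ.filter fun i => k + 1 < ν i) ⊆
      Finset.univ.filter fun i => k < ν i := by
    intro i hi
    simp only [Finset.mem_filter, Finset.mem_univ, true_and] at *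
    omega
  rw [← Finset.card_sdiff_of_subset hsub]
  congr 1
  ext i
  simp only [Finset.mem_sdiff, Finset.mem_filter, Finset.mem_univ, true_and]
  omega

/-- The canonical-form group of a row is isomorphic to the product of cyclic groups given
by the conjugate partition. -/
noncomputable def rowEquiv (p n : ℕ) (lam : ℕ → ℕ) (hmono : ∀ k, lam (k + 1) ≤ lam k)
    (hvan : ∀ k, n ≤ k → lam k = 0) (hle : ∀ k, lam k ≤ n) :
    ((k : Fin n) → Fin (lam k - lam ((k : ℕ) + 1)) → ZMod (p ^ ((k : ℕ) + 1))) ≃+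
      ∀ i : Fin n, ZMod (p ^ conj n lam i.1) :=
  modelEquiv p n (fun i : Fin n => conj n lam i.1) (fun i => conj_le n lam i.1)
    (fun k => lam k - lam ((k : ℕ) + 1))
    (fun k => (card_fiber_eq hmono hvan hle (k : ℕ)).symm)

theorem card_Sgrp_row {p : ℕ} (hp : p.Prime) (n : ℕ) (lam : ℕ → ℕ)
    (hmono : ∀ k, lam (k + 1) ≤ lam k) (hvan : ∀ k, n ≤ k → lam k = 0)
    (hle : ∀ k, lam k ≤ n) (m : ℕ) :
    Nat.card (Sgrp p m
        ((k : Fin n) → Fin (lam k - lam ((k : ℕ) + 1)) → ZMod (p ^ ((k : ℕ) + 1))))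
      = p ^ lam m := by
  rw [Sgrp_card_congr p m (rowEquiv p n lam hmono hvan hle),
    card_Sgrp_model hp, card_lt_conj_eq hmono hvan hle]

theorem card_row (p n : ℕ) (lam : ℕ → ℕ) (hmono : ∀ k, lam (k + 1) ≤ lam k)
    (hvan : ∀ k, n ≤ k → lam k = 0) (hle : ∀ k, lam k ≤ n) :
    Nat.card ((k : Fin n) → Fin (lam k - lam ((k : ℕ) + 1)) → ZMod (p ^ ((k : ℕ) + 1)))
      = p ^ ∑ k ∈ Finset.range n, lam k := by
  rw [Nat.card_congr (rowEquiv p n lam hmono hvan hle).toEquiv, card_model]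
  congr 1
  rw [Fin.sum_univ_eq_sum_range (fun i => conj n lam i)]
  exact double_count' n lam hle

theorem rel_of_quot_eq {r : ℕ} {t u : GroupTuple r}
    (h : Quot.mk GroupTuple.Rel t = Quot.mk GroupTuple.Rel u) : GroupTuple.Rel t u := by
  have h2 := Quot.eqvGen_exact h
  clear h
  induction h2 with
  | rel _ _ h => exact h
  | refl _ => exact fun j => ⟨AddEquiv.refl _⟩
  | symm _ _ _ ih => exact fun j => (ih j).elim fun e => ⟨e.symm⟩
  | trans _ _ _ _ _ ih1 ih2 =>
      exact fun j => (ih1 j).elim fun e => (ih2 j).elim fun f => ⟨e.trans f⟩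

theorem PlanePartition.ext' {n : ℕ} {P Q : PlanePartition n} (h : P.part = Q.part) : P = Q := by
  cases P; cases Q; simp only at h; subst h; rfl


/-- For a prime `p` and positive integers `n`, `r`, the map `λ ↦ (G₁, …, G_r)` above is a
bijection from the set of plane partitions of `n` with at most `r` nonzero rows onto the set
of isomorphism classes of pairs `(G, (G_j))` with `G` an abelian group of order `p^n` and
`(G_j)` a group-partition of `G` with at most `r` factors; the latter set is realized as the
set of componentwise-isomorphism classes of `r`-tuples of abelian groups with descending
embeddings `G₁ ⊇ G₂ ⊇ ⋯ ⊇ G_r` (trivial tail entries allowed) and `|G₁| ⋯ |G_r| = p^n`. -/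

theorem planePartition_bijOn_groupPartitions (p n r : ℕ) (hp : p.Prime) (hn : 0 < n)
    (hr : 0 < r) :
    Set.BijOn (fun P : PlanePartition n => Quot.mk GroupTuple.Rel (planePartitionToTuple p n r P))
      {P : PlanePartition n | ∀ j : ℕ, r ≤ j → ∀ k, P.part j k = 0}
      {c : Quot (GroupTuple.Rel (r := r)) | ∃ t : GroupTuple r, Quot.mk GroupTuple.Rel t = c ∧
        (∀ (j : ℕ) (h : j + 1 < r),
          ∃ f : t.factor ⟨j + 1, h⟩ →+ t.factor ⟨j, Nat.lt_of_succ_lt h⟩,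
            Function.Injective f) ∧
        (∏ j, Nat.card (t.factor j)) = p ^ n} := by
  classical
  refine ⟨?_, ?_, ?_⟩
  -- MapsTo
  · intro P hP
    refine ⟨planePartitionToTuple p n r P, rfl, ?_, ?_⟩
    · intro j hj1
      have hj0 : j < r := Nat.lt_of_succ_lt hj1
      have e1 := rowEquiv p n (fun k => P.part (j + 1) k) (P.decr_row (j + 1))
        (fun k hk => P.part_eq_zero_of_le hk) (fun k => P.part_le (j + 1) k)
      have e0 := rowEquiv p n (fun k => P.part j k) (P.decr_row j)
        (fun k hk => P.part_eq_zero_of_le hk) (fun k => P.part_le j k)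
      have hcle : ∀ i : Fin n,
          conj n (fun k => P.part (j + 1) k) i.1 ≤ conj n (fun k => P.part j k) i.1 := by
        intro i
        refine Finset.card_le_card fun k hk => ?_
        simp only [Finset.mem_filter, Finset.mem_range] at *
        exact ⟨hk.1, lt_of_lt_of_le hk.2 (P.decr_col j k)⟩
      refine ⟨e0.symm.toAddMonoidHom.comp
        ((piZmodInj p (ν' := fun i : Fin n => conj n (fun k => P.part (j + 1) k) i.1)
          (ν := fun i : Fin n => conj n (fun k => P.part j k) i.1) hcle).comp
          e1.toAddMonoidHom), ?_⟩
      exact e0.symm.injective.comp ((piZmodInj_injective hp hcle).comp e1.injective)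
    · have hcr : ∀ j : Fin r, Nat.card ((planePartitionToTuple p n r P).factor j) =
          p ^ ∑ k ∈ Finset.range n, P.part j k := fun j =>
        card_row p n (fun k => P.part j k) (P.decr_row j)
          (fun k hk => P.part_eq_zero_of_le hk) (fun k => P.part_le j k)
      calc ∏ j, Nat.card ((planePartitionToTuple p n r P).factor j)
          = ∏ j : Fin r, p ^ ∑ k ∈ Finset.range n, P.part j k :=
            Finset.prod_congr rfl fun j _ => hcr j
        _ = p ^ ∑ j : Fin r, ∑ k ∈ Finset.range n, P.part (j : ℕ) k :=
            Finset.prod_pow_eq_pow_sum _ _ _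
        _ = p ^ ∑ j ∈ Finset.range r, ∑ k ∈ Finset.range n, P.part j k := by
            rw [Fin.sum_univ_eq_sum_range (fun j => ∑ k ∈ Finset.range n, P.part j k)]
        _ = p ^ n := by rw [P.sum_rect_rn hP]
  -- InjOn
  · intro P hP Q hQ hquot
    have hrel := rel_of_quot_eq hquot
    refine PlanePartition.ext' (funext fun j => funext fun k => ?_)
    by_cases hj : j < r
    · obtain ⟨e⟩ := hrel ⟨j, hj⟩
      have h1 := card_Sgrp_row hp n (fun k => P.part j k) (P.decr_row j)
        (fun k hk => P.part_eq_zero_of_le hk) (fun k => P.part_le j k) k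
      have h2 := card_Sgrp_row hp n (fun k => Q.part j k) (Q.decr_row j)
        (fun k hk => Q.part_eq_zero_of_le hk) (fun k => Q.part_le j k) k
      have h3 := Sgrp_card_congr p k e
      refine Nat.pow_right_injective hp.two_le ?_
      show p ^ P.part j k = p ^ Q.part j k
      rw [← h1, ← h2]
      exact h3
    · rw [hP j (le_of_not_gt hj) k, hQ j (le_of_not_gt hj) k]
  -- SurjOn
  · rintro c ⟨t, hct, hemb, hprod⟩
    have hfin : ∀ j, Finite (t.factor j) := by
      intro j
      refine Nat.finite_of_card_ne_zero fun h0 => ?_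
      rw [Finset.prod_eq_zero (Finset.mem_univ j) h0] at hprod
      exact (pow_ne_zero n hp.ne_zero) hprod.symm
    have key : ∀ j : Fin r, ∃ (ι : Type) (_ : Fintype ι) (ν : ι → ℕ),
        Nonempty (t.factor j ≃+ ∀ i : ι, ZMod (p ^ ν i)) := by
      intro j
      haveI := hfin j
      obtain ⟨ι, hι, d, hd1, ⟨e⟩⟩ := AddCommGroup.equiv_directSum_zmod_of_finite' (t.factor j)
      haveI := hι
      have e2 : DirectSum ι (fun i => ZMod (d i)) ≃+ ((i : ι) → ZMod (d i)) :=
        { DFinsupp.equivFunOnFintype with map_add' := fun a b => rfl }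
      have hcard : Nat.card (t.factor j) = ∏ i, d i := by
        rw [Nat.card_congr (e.trans e2).toEquiv, Nat.card_pi]
        exact Finset.prod_congr rfl fun i _ => Nat.card_zmod _
      have hdvd : ∀ i, d i ∣ p ^ n := by
        intro i
        refine dvd_trans (Finset.dvd_prod_of_mem d (Finset.mem_univ i)) ?_
        rw [← hcard]
        calc Nat.card (t.factor j) ∣ ∏ j', Nat.card (t.factor j') :=
            Finset.dvd_prod_of_mem _ (Finset.mem_univ j)
          _ = p ^ n := hprod
      choose ν hν1 hν2 using fun i => (Nat.dvd_prime_pow hp).mp (hdvd i)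
      exact ⟨ι, inferInstance, ν, ⟨e.trans (e2.trans
        (AddEquiv.piCongrRight fun i => zmodCastEq (hν2 i)))⟩⟩
    choose ι hfint ν hiso using key
    haveI : ∀ j, Fintype (ι j) := hfint
    have eqv : ∀ j : Fin r, t.factor j ≃+ ((i : ι j) → ZMod (p ^ ν j i)) :=
      fun j => (hiso j).some
    set m : Fin r → ℕ := fun j => ∑ i, ν j i with hm
    have hcard : ∀ j, Nat.card (t.factor j) = p ^ m j := fun j =>
      (Nat.card_congr (eqv j).toEquiv).trans (card_model p (ν j))
    have hsum : ∑ j, m j = n := by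
      refine Nat.pow_right_injective hp.two_le ?_
      show p ^ (∑ j, m j) = p ^ n
      rw [← Finset.prod_pow_eq_pow_sum, ← hprod]
      exact Finset.prod_congr rfl fun j _ => (hcard j).symm
    have hνle : ∀ (j : Fin r) (i : ι j), ν j i ≤ n := by
      intro j i
      have h1 : ν j i ≤ m j :=
        Finset.single_le_sum (f := ν j) (fun _ _ => Nat.zero_le _) (Finset.mem_univ i)
      have h2 : m j ≤ ∑ j', m j' :=
        Finset.single_le_sum (f := m) (fun _ _ => Nat.zero_le _) (Finset.mem_univ j)
      exact le_trans h1 (le_trans h2 (le_of_eq hsum))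
    set lam : ℕ → ℕ → ℕ := fun j k => if h : j < r then
        (Finset.univ.filter fun i => k < ν ⟨j, h⟩ i).card else 0 with hlam
    have hlam_pos : ∀ (j : ℕ) (h : j < r) (k : ℕ),
        lam j k = (Finset.univ.filter fun i => k < ν ⟨j, h⟩ i).card := fun j h k => dif_pos h
    have hlam_zero : ∀ (j : ℕ), r ≤ j → ∀ k, lam j k = 0 := fun j h k => dif_neg (by omega)
    have hlam_van : ∀ j k, n ≤ k → lam j k = 0 := by
      intro j k hk
      by_cases h : j < r
      · rw [hlam_pos j h k, Finset.card_eq_zero, Finset.filter_eq_empty_iff]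
        intro i _
        have := hνle ⟨j, h⟩ i
        omega
      · exact hlam_zero j (by omega) k
    have hSg : ∀ (j : Fin r) (k : ℕ), Nat.card (Sgrp p k (t.factor j)) =
        p ^ (Finset.univ.filter fun i => k < ν j i).card := fun j k =>
      (Sgrp_card_congr p k (eqv j)).trans (card_Sgrp_model hp (ν j) k)
    have hrow : ∀ j k, lam j (k + 1) ≤ lam j k := by
      intro j k
      by_cases h : j < r
      · rw [hlam_pos j h k, hlam_pos j h (k + 1)]
        refine Finset.card_le_card fun i hi => ?_
        simp only [Finset.mem_filter, Finset.mem_univ, true_and] at *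
        omega
      · rw [hlam_zero j (by omega) (k + 1)]
        exact Nat.zero_le _
    have hcol : ∀ j k, lam (j + 1) k ≤ lam j k := by
      intro j k
      by_cases h : j + 1 < r
      · have h0 : j < r := Nat.lt_of_succ_lt h
        obtain ⟨f, hf⟩ := hemb j h
        haveI := hfin ⟨j, h0⟩
        have hle := Sgrp_card_le_of_inj p k f hf
        rw [hSg ⟨j + 1, h⟩ k, hSg ⟨j, h0⟩ k] at hle
        rw [hlam_pos (j + 1) h k, hlam_pos j h0 k]
        exact (Nat.pow_le_pow_iff_right hp.one_lt).mp hle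
      · rw [hlam_zero (j + 1) (by omega) k]
        exact Nat.zero_le _
    have hsupp : ∀ j k, lam j k ≠ 0 → j < r ∧ k < n := by
      intro j k hne
      constructor
      · by_contra h
        exact hne (hlam_zero j (by omega) k)
      · by_contra h
        exact hne (hlam_van j k (by omega))
    have hsum_lam : ∑ j ∈ Finset.range r, ∑ k ∈ Finset.range n, lam j k = n := by
      rw [← Fin.sum_univ_eq_sum_range (fun j => ∑ k ∈ Finset.range n, lam j k) r]
      have hrowsum : ∀ j : Fin r, ∑ k ∈ Finset.range n, lam (j : ℕ) k = m j := by
        intro j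
        have hl : ∀ k, lam (j : ℕ) k = (Finset.univ.filter fun i => k < ν j i).card :=
          fun k => hlam_pos (j : ℕ) j.2 k
        rw [Finset.sum_congr rfl fun k _ => hl k]
        exact double_count n (ν j) (hνle j)
      rw [Finset.sum_congr rfl fun j _ => hrowsum j]
      exact hsum
    set P : PlanePartition n :=
      { part := lam
        decr_row := hrow
        decr_col := hcol
        finite := by
          refine Set.Finite.subset ((Finset.range r ×ˢ Finset.range n).finite_toSet) ?_
          intro x hx
          simp only [Finset.coe_product, Set.mem_prod, Finset.mem_coe, Finset.mem_range]
          exact hsupp x.1 x.2 hx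
        sum_eq := by
          rw [finsum_finsum_eq_sum lam r n hsupp]
          exact hsum_lam } with hPdef
    refine ⟨P, hlam_zero, ?_⟩
    rw [← hct]
    refine Quot.sound fun j => ?_
    have ha : ∀ k : Fin n, lam (j : ℕ) (k : ℕ) - lam (j : ℕ) ((k : ℕ) + 1) =
        Fintype.card {i // ν j i = (k : ℕ) + 1} := by
      intro k
      rw [hlam_pos (j : ℕ) j.2, hlam_pos (j : ℕ) j.2]
      exact count_diff (ν j) (k : ℕ)
    exact ⟨(modelEquiv p n (ν j) (hνle j)
      (fun k : Fin n => lam (j : ℕ) (k : ℕ) - lam (j : ℕ) ((k : ℕ) + 1)) ha).trans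
      (eqv j).symm⟩
end

section
/- For every positive integer r, and also for r = ∞, the arithmetic function a_r is multiplicative: if m and n are coprime positive integers, then a_r(mn) = a_r(m) · a_r(n). -/
open scoped ENat

/-- A group-partition: a finite weakly descending (each factor embeds in the previous one)
sequence of nontrivial finite abelian groups, recording the sequence of isomorphism classes
`G₁ ⊇ G₂ ⊇ ⋯` of a decomposition `G = G₁ ⊕ G₂ ⊕ ⋯`. -/
structure AbGroupPartition : Type 1 where
  len : ℕ
  factor : Fin len → Type
  [grp : ∀ j, AddCommGroup (factor j)]
  [fin : ∀ j, Finite (factor j)]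
  nontriv : ∀ j, Nontrivial (factor j)
  mono : ∀ (j : ℕ) (h : j + 1 < len),
    ∃ f : factor ⟨j + 1, h⟩ →+ factor ⟨j, Nat.lt_of_succ_lt h⟩, Function.Injective f

attribute [instance] AbGroupPartition.grp AbGroupPartition.fin

/-- `P` is a group-partition of `G`, i.e. `G ≅ G₁ ⊕ ⋯ ⊕ G_len`. -/
def AbGroupPartition.IsPartitionOf (P : AbGroupPartition) (G : Type*) [AddCommGroup G] : Prop :=
  Nonempty (G ≃+ ((j : Fin P.len) → P.factor j))

/-- Componentwise isomorphism of group-partitions (i.e. equality of the underlying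
sequences of isomorphism classes). -/
def AbGroupPartition.Equiv (P Q : AbGroupPartition) : Prop :=
  ∃ h : P.len = Q.len, ∀ j : Fin P.len, Nonempty (P.factor j ≃+ Q.factor (Fin.cast h j))

/-- `π_r(G)`: the number of group-partitions of `G` with at most `r` factors
(`r = ⊤` meaning no restriction on the number of factors). -/
noncomputable def partitionCount (r : ℕ∞) (G : Type*) [AddCommGroup G] : ℕ :=
  Nat.card (Quot fun P Q : {P : AbGroupPartition // P.IsPartitionOf G ∧ (P.len : ℕ∞) ≤ r} =>
    P.1.Equiv Q.1)

/-- `a_r(n) = ∑_{|G| = n} π_r(G)`: the number of isomorphism classes of pairs of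
a finite abelian group of order `n` together with a group-partition of it with at most `r`
factors (`r = ⊤` meaning no restriction). -/
noncomputable def abelianCount (r : ℕ∞) (n : ℕ) : ℕ :=
  Nat.card (Quot fun P Q : {P : AbGroupPartition //
      (∏ j, Nat.card (P.factor j)) = n ∧ (P.len : ℕ∞) ≤ r} => P.1.Equiv Q.1)

/-!
A group-partition `G₁ ⊇ G₂ ⊇ ⋯` is determined by its sequence of factors, padded with trivial
groups. If its order is `mn` with `m, n` coprime, every factor splits as `Gⱼ ≅ Gⱼ[m] × Gⱼ[n]`,
and `m`-torsion preserves embeddings, so the nontrivial `Gⱼ[m]` form a group-partition whose order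
is coprime to `n`; as the orders of the `m`- and `n`-parts multiply to `mn`, they are `m` and `n`.
Conversely, group-partitions of orders `m` and `n` merge factorwise into one of order `mn`, and
the two constructions are mutually inverse on isomorphism classes.
-/

theorem Submodule.isCompl_torsionBy_of_isCoprime {R M : Type*} [CommRing R] [AddCommGroup M]
    [Module R M] {a b : R} (hab : IsCoprime a b) (hM : Module.IsTorsionBy R M (a * b)) :
    IsCompl (torsionBy R M a) (torsionBy R M b) := by
  have hsup : Ideal.span {a} ⊔ Ideal.span {b} = ⊤ := (Ideal.sup_eq_top_iff_isCoprime a b).2 hab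
  rw [← torsionBySet_ideal_span_singleton_eq a, ← torsionBySet_ideal_span_singleton_eq b]
  refine ⟨disjoint_torsionBySet_ideal hsup, codisjoint_iff.2 ?_⟩
  rw [sup_torsionBySet_ideal_eq_torsionBySet_inf _ _ (hc := hsup),
    ← Ideal.mul_eq_inf_of_isCoprime (Ideal.isCoprime_iff_sup_eq.2 hsup),
    Ideal.span_singleton_mul_span_singleton, torsionBySet_ideal_span_singleton_eq,
    ← Module.isTorsionBy_iff_torsionBy_eq_top]
  exact hM

theorem nonempty_addEquiv_of_subsingleton (A B : Type*) [AddCommGroup A] [AddCommGroup B]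
    [Subsingleton A] [Subsingleton B] : Nonempty (A ≃+ B) :=
  have := uniqueOfSubsingleton (0 : A)
  have := uniqueOfSubsingleton (0 : B)
  ⟨AddEquiv.ofUnique⟩

theorem subsingleton_of_le_of_injective {F : ℕ → Type*}
    (hF : ∀ j, ∃ f : F (j + 1) → F j, Function.Injective f) {i j : ℕ}
    (hi : Subsingleton (F i)) (hij : i ≤ j) : Subsingleton (F j) := by
  induction j, hij using Nat.le_induction with
  | base => exact hi
  | succ j _ ih =>
    obtain ⟨f, hf⟩ := hF j
    exact hf.subsingleton

open AddSubgroup (torsionBy)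

section Torsion

variable {G H : Type*} [AddCommGroup G] [AddCommGroup H]

def AddMonoidHom.torsionByRestrict (f : G →+ H) (m : ℕ) : torsionBy G m →+ torsionBy H m :=
  (f.comp (torsionBy G m).subtype).codRestrict _ fun x =>
    AddSubgroup.torsionBy.nsmul_iff.2 <| by
      rw [comp_apply, ← map_nsmul, AddSubgroup.coe_subtype,
        AddSubgroup.torsionBy.nsmul_iff.1 x.2, map_zero]

theorem AddMonoidHom.torsionByRestrict_injective {m : ℕ} {f : G →+ H}
    (hf : Function.Injective f) : Function.Injective (f.torsionByRestrict m) :=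
  fun _ _ h => Subtype.ext (hf (congrArg Subtype.val h))

def AddEquiv.torsionByCongr (e : G ≃+ H) (m : ℕ) : torsionBy G m ≃+ torsionBy H m where
  toFun := e.toAddMonoidHom.torsionByRestrict m
  invFun := e.symm.toAddMonoidHom.torsionByRestrict m
  left_inv x := Subtype.ext (e.symm_apply_apply x)
  right_inv x := Subtype.ext (e.apply_symm_apply x)
  map_add' := map_add _

variable {m n : ℕ}

theorem nsmul_eq_zero_of_card_dvd [Finite G] (h : Nat.card G ∣ m) (x : G) : m • x = 0 :=
  addOrderOf_dvd_iff_nsmul_eq_zero.1 ((addOrderOf_dvd_natCard x).trans h)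

theorem AddSubgroup.torsionBy_prod :
    torsionBy (G × H) m = (torsionBy G m).prod (torsionBy H m) := by
  ext x
  simp only [mem_prod, torsionBy.nsmul_iff, Prod.ext_iff, Prod.smul_fst, Prod.smul_snd,
    Prod.fst_zero, Prod.snd_zero]

theorem AddSubgroup.torsionBy_eq_top_of_card_dvd [Finite G] (h : Nat.card G ∣ m) :
    torsionBy G m = ⊤ :=
  eq_top_iff.2 fun x _ => torsionBy.nsmul_iff.2 (nsmul_eq_zero_of_card_dvd h x)

theorem AddSubgroup.torsionBy_eq_bot_of_coprime [Finite G] (h : (Nat.card G).Coprime m) :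
    torsionBy G m = ⊥ :=
  eq_bot_iff.2 fun x hx => AddSubgroup.mem_bot.2 <| AddMonoid.addOrderOf_eq_one_iff.1 <|
    Nat.eq_one_of_dvd_coprimes h (_root_.addOrderOf_dvd_natCard x)
      (addOrderOf_dvd_of_nsmul_eq_zero (torsionBy.nsmul_iff.1 hx))

theorem coprime_card_torsionBy [Finite G] (h : m.Coprime n) :
    (Nat.card (torsionBy G m)).Coprime n :=
  Nat.coprime_of_dvd fun p hp hpG hpn => by
    have := Fact.mk hp
    obtain ⟨x, hx⟩ := exists_prime_addOrderOf_dvd_card' p hpG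
    have hpm : p ∣ m := hx ▸ addOrderOf_dvd_of_nsmul_eq_zero (torsionBy.nsmul x)
    exact hp.one_lt.ne' (Nat.eq_one_of_dvd_coprimes h hpm hpn)

noncomputable def torsionByProdEquiv (hmn : m.Coprime n) (hG : ∀ x : G, (m * n) • x = 0) :
    torsionBy G m × torsionBy G n ≃+ G :=
  (Submodule.prodEquivOfIsCompl _ _ <| Submodule.isCompl_torsionBy_of_isCoprime
    (Nat.isCoprime_iff_coprime.2 hmn) fun x => by
      rw [← Nat.cast_mul, natCast_zsmul]; exact hG x).toAddEquiv

theorem nonempty_torsionBy_prod_addEquiv_left [Finite G] [Finite H] (hG : Nat.card G ∣ m)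
    (hH : (Nat.card H).Coprime m) : Nonempty (torsionBy (G × H) m ≃+ G) := by
  rw [AddSubgroup.torsionBy_prod, AddSubgroup.torsionBy_eq_top_of_card_dvd hG,
    AddSubgroup.torsionBy_eq_bot_of_coprime hH]
  exact ⟨(AddSubgroup.prodEquiv ⊤ ⊥).trans (AddEquiv.prodUnique.trans AddSubgroup.topEquiv)⟩

theorem nonempty_torsionBy_prod_addEquiv_right [Finite G] [Finite H]
    (hG : (Nat.card G).Coprime n) (hH : Nat.card H ∣ n) : Nonempty (torsionBy (G × H) n ≃+ H) := by
  rw [AddSubgroup.torsionBy_prod, AddSubgroup.torsionBy_eq_bot_of_coprime hG,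
    AddSubgroup.torsionBy_eq_top_of_card_dvd hH]
  exact ⟨(AddSubgroup.prodEquiv ⊥ ⊤).trans (AddEquiv.uniqueProd.trans AddSubgroup.topEquiv)⟩

end Torsion

namespace AbGroupPartition

variable (P Q : AbGroupPartition)

noncomputable def order : ℕ := ∏ j, Nat.card (P.factor j)

/-- The `j`-th factor for every `j : ℕ`, as a subgroup of `∏ i, P.factor i`; it is trivial for
`j ≥ P.len`. -/
def paddedFactor (j : ℕ) : AddSubgroup ((i : Fin P.len) → P.factor i) :=
  AddSubgroup.pi {i | i.1 ≠ j} fun _ => ⊥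

theorem mem_paddedFactor_iff {j : ℕ} {x : (i : Fin P.len) → P.factor i} :
    x ∈ P.paddedFactor j ↔ ∀ i : Fin P.len, i.1 ≠ j → x i = 0 := by
  simp only [paddedFactor, AddSubgroup.mem_pi, Set.mem_ofPred_eq, AddSubgroup.mem_bot]

noncomputable def paddedFactorEquiv {j : ℕ} (h : j < P.len) :
    P.paddedFactor j ≃+ P.factor ⟨j, h⟩ where
  toFun x := x.1 ⟨j, h⟩
  invFun y := ⟨Pi.single ⟨j, h⟩ y, P.mem_paddedFactor_iff.2 fun i hi =>
    Pi.single_eq_of_ne (fun e => hi (congrArg Fin.val e)) y⟩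
  left_inv x := Subtype.ext <| funext fun i => by
    by_cases hi : i = ⟨j, h⟩
    · subst hi
      exact Pi.single_eq_same _ _
    · exact (Pi.single_eq_of_ne hi _).trans
        (P.mem_paddedFactor_iff.1 x.2 i fun e => hi (Fin.ext e)).symm
  right_inv y := Pi.single_eq_same _ y
  map_add' _ _ := rfl

theorem subsingleton_paddedFactor {j : ℕ} (h : P.len ≤ j) : Subsingleton (P.paddedFactor j) :=
  ⟨fun x y => Subtype.ext <| funext fun i => by
    rw [P.mem_paddedFactor_iff.1 x.2 i (by omega), P.mem_paddedFactor_iff.1 y.2 i (by omega)]⟩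

theorem nontrivial_paddedFactor_iff {j : ℕ} : Nontrivial (P.paddedFactor j) ↔ j < P.len := by
  refine ⟨fun hnt => ?_, fun h => ?_⟩
  · by_contra! h
    have := P.subsingleton_paddedFactor h
    exact false_of_nontrivial_of_subsingleton (P.paddedFactor j)
  · have := P.nontriv ⟨j, h⟩
    exact (P.paddedFactorEquiv h).toEquiv.nontrivial

theorem exists_injective_paddedFactor_succ (j : ℕ) :
    ∃ f : P.paddedFactor (j + 1) →+ P.paddedFactor j, Function.Injective f := by
  by_cases h : j + 1 < P.len
  · obtain ⟨f, hf⟩ := P.mono j h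
    have hj : j < P.len := by omega
    exact ⟨((P.paddedFactorEquiv hj).symm.toAddMonoidHom.comp f).comp
      (P.paddedFactorEquiv h).toAddMonoidHom,
      (P.paddedFactorEquiv hj).symm.injective.comp (hf.comp (P.paddedFactorEquiv h).injective)⟩
  · have := P.subsingleton_paddedFactor (j := j + 1) (by omega)
    exact ⟨0, fun _ _ _ => Subsingleton.elim _ _⟩

theorem order_eq_prod_range {L : ℕ} (hL : P.len ≤ L) :
    P.order = ∏ j ∈ Finset.range L, Nat.card (P.paddedFactor j) := by
  rw [← Finset.prod_range_mul_prod_Ico _ hL, Finset.prod_eq_one fun j hj =>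
    have := P.subsingleton_paddedFactor (Finset.mem_Ico.1 hj).1
    Nat.card_unique, mul_one, ← Fin.prod_univ_eq_prod_range]
  exact Finset.prod_congr rfl fun j _ => (Nat.card_congr (P.paddedFactorEquiv j.2).toEquiv).symm

theorem card_paddedFactor_dvd_order (j : ℕ) : Nat.card (P.paddedFactor j) ∣ P.order := by
  rw [P.order_eq_prod_range (le_max_left P.len (j + 1))]
  exact Finset.dvd_prod_of_mem _ (Finset.mem_range.2 (by omega))

variable {P Q}

theorem equiv_iff_nonempty_paddedFactor :
    P.Equiv Q ↔ ∀ j, Nonempty (P.paddedFactor j ≃+ Q.paddedFactor j) := by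
  refine ⟨fun ⟨hlen, he⟩ j => ?_, fun he => ?_⟩
  · by_cases h : j < P.len
    · exact ⟨(P.paddedFactorEquiv h).trans <| (he ⟨j, h⟩).some.trans
        (Q.paddedFactorEquiv (hlen ▸ h)).symm⟩
    · have := P.subsingleton_paddedFactor (not_lt.1 h)
      have := Q.subsingleton_paddedFactor (j := j) (by omega)
      exact nonempty_addEquiv_of_subsingleton _ _
  · have hlen : P.len = Q.len := eq_of_forall_lt_iff fun j => by
      obtain ⟨e⟩ := he j
      rw [← nontrivial_paddedFactor_iff, ← nontrivial_paddedFactor_iff]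
      exact e.toEquiv.nontrivial_congr
    exact ⟨hlen, fun j => ⟨(P.paddedFactorEquiv j.2).symm.trans <| (he j).some.trans
      (Q.paddedFactorEquiv (hlen ▸ j.2))⟩⟩

theorem equiv_refl (P : AbGroupPartition) : P.Equiv P :=
  ⟨rfl, fun _ => ⟨AddEquiv.refl _⟩⟩

theorem Equiv.order_eq (h : P.Equiv Q) : P.order = Q.order := by
  rw [P.order_eq_prod_range le_rfl, Q.order_eq_prod_range h.1.ge]
  exact Finset.prod_congr rfl fun j _ =>
    Nat.card_congr ((equiv_iff_nonempty_paddedFactor.1 h j).some.toEquiv)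

section OfSeq

variable (F : ℕ → Type) [∀ j, AddCommGroup (F j)] [∀ j, Finite (F j)]
  (hF : ∀ j, ∃ f : F (j + 1) →+ F j, Function.Injective f) (hfin : ∃ L, Subsingleton (F L))

open Classical in
/-- The group-partition whose factors are the nontrivial terms of a sequence of finite abelian
groups, each embedding into its predecessor. -/
noncomputable def ofSeq : AbGroupPartition where
  len := Nat.find hfin
  factor j := F j
  nontriv j := not_subsingleton_iff_nontrivial.1 (Nat.find_min hfin j.2)
  mono j _ := hF j

variable {F hF hfin}

theorem len_ofSeq_le {L : ℕ} (hL : Subsingleton (F L)) : (ofSeq F hF hfin).len ≤ L := by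
  classical
  exact Nat.find_min' hfin hL

theorem nonempty_paddedFactor_ofSeq (j : ℕ) :
    Nonempty ((ofSeq F hF hfin).paddedFactor j ≃+ F j) := by
  classical
  by_cases h : j < (ofSeq F hF hfin).len
  · exact ⟨(ofSeq F hF hfin).paddedFactorEquiv h⟩
  · have := (ofSeq F hF hfin).subsingleton_paddedFactor (not_lt.1 h)
    have := subsingleton_of_le_of_injective (fun i => (hF i).elim fun f hf => ⟨f, hf⟩)
      (Nat.find_spec hfin) (not_lt.1 h)
    exact nonempty_addEquiv_of_subsingleton _ _

theorem order_ofSeq {L : ℕ} (hL : Subsingleton (F L)) :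
    (ofSeq F hF hfin).order = ∏ j ∈ Finset.range L, Nat.card (F j) := by
  rw [order_eq_prod_range _ (len_ofSeq_le hL)]
  exact Finset.prod_congr rfl fun j _ =>
    Nat.card_congr (nonempty_paddedFactor_ofSeq j).some.toEquiv

end OfSeq

variable (P Q) (m n : ℕ)

/-- The partition of the `m`-torsion subgroup induced by `P`. -/
noncomputable def torsionPart : AbGroupPartition :=
  ofSeq (fun j => torsionBy (P.paddedFactor j) m)
    (fun j => (P.exists_injective_paddedFactor_succ j).elim fun f hf =>
      ⟨f.torsionByRestrict m, AddMonoidHom.torsionByRestrict_injective hf⟩)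
    ⟨P.len, have := P.subsingleton_paddedFactor le_rfl; inferInstance⟩

noncomputable def merge : AbGroupPartition :=
  ofSeq (fun j => P.paddedFactor j × Q.paddedFactor j)
    (fun j => (P.exists_injective_paddedFactor_succ j).elim fun f hf =>
      (Q.exists_injective_paddedFactor_succ j).elim fun g hg => ⟨f.prodMap g, hf.prodMap hg⟩)
    ⟨max P.len Q.len, have := P.subsingleton_paddedFactor (le_max_left P.len Q.len)
      have := Q.subsingleton_paddedFactor (le_max_right P.len Q.len); inferInstance⟩

theorem len_torsionPart_le : (P.torsionPart m).len ≤ P.len :=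
  len_ofSeq_le (have := P.subsingleton_paddedFactor le_rfl; inferInstance)

theorem len_merge_le : (P.merge Q).len ≤ max P.len Q.len :=
  len_ofSeq_le (have := P.subsingleton_paddedFactor (le_max_left P.len Q.len)
    have := Q.subsingleton_paddedFactor (le_max_right P.len Q.len); inferInstance)

theorem nonempty_paddedFactor_torsionPart (j : ℕ) :
    Nonempty ((P.torsionPart m).paddedFactor j ≃+ torsionBy (P.paddedFactor j) m) :=
  nonempty_paddedFactor_ofSeq j

theorem nonempty_paddedFactor_merge (j : ℕ) :
    Nonempty ((P.merge Q).paddedFactor j ≃+ P.paddedFactor j × Q.paddedFactor j) :=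
  nonempty_paddedFactor_ofSeq j

theorem order_merge : (P.merge Q).order = P.order * Q.order := by
  have := P.subsingleton_paddedFactor (le_max_left P.len Q.len)
  have := Q.subsingleton_paddedFactor (le_max_right P.len Q.len)
  rw [merge, order_ofSeq (L := max P.len Q.len) inferInstance,
    P.order_eq_prod_range (le_max_left P.len Q.len),
    Q.order_eq_prod_range (le_max_right P.len Q.len), ← Finset.prod_mul_distrib]
  exact Finset.prod_congr rfl fun j _ => Nat.card_prod _ _

variable {P Q} {m n}

theorem Equiv.torsionPart {P' : AbGroupPartition} (h : P.Equiv P') :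
    (P.torsionPart m).Equiv (P'.torsionPart m) :=
  equiv_iff_nonempty_paddedFactor.2 fun j =>
    let ⟨e⟩ := equiv_iff_nonempty_paddedFactor.1 h j
    let ⟨e₁⟩ := P.nonempty_paddedFactor_torsionPart m j
    let ⟨e₂⟩ := P'.nonempty_paddedFactor_torsionPart m j
    ⟨e₁.trans ((e.torsionByCongr m).trans e₂.symm)⟩

theorem Equiv.merge {P' Q' : AbGroupPartition} (hP : P.Equiv P') (hQ : Q.Equiv Q') :
    (P.merge Q).Equiv (P'.merge Q') :=
  equiv_iff_nonempty_paddedFactor.2 fun j =>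
    let ⟨e⟩ := equiv_iff_nonempty_paddedFactor.1 hP j
    let ⟨f⟩ := equiv_iff_nonempty_paddedFactor.1 hQ j
    let ⟨e₁⟩ := P.nonempty_paddedFactor_merge Q j
    let ⟨e₂⟩ := P'.nonempty_paddedFactor_merge Q' j
    ⟨e₁.trans ((e.prodCongr f).trans e₂.symm)⟩

theorem merge_torsionPart_equiv (hmn : m.Coprime n) (hP : P.order = m * n) :
    ((P.torsionPart m).merge (P.torsionPart n)).Equiv P :=
  equiv_iff_nonempty_paddedFactor.2 fun j =>
    let ⟨e⟩ := (P.torsionPart m).nonempty_paddedFactor_merge (P.torsionPart n) j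
    let ⟨e₁⟩ := P.nonempty_paddedFactor_torsionPart m j
    let ⟨e₂⟩ := P.nonempty_paddedFactor_torsionPart n j
    ⟨e.trans ((e₁.prodCongr e₂).trans (torsionByProdEquiv hmn
      (nsmul_eq_zero_of_card_dvd (hP ▸ P.card_paddedFactor_dvd_order j))))⟩

theorem torsionPart_merge_equiv_left (hmn : m.Coprime n) (hP : P.order = m)
    (hQ : Q.order = n) : ((P.merge Q).torsionPart m).Equiv P :=
  equiv_iff_nonempty_paddedFactor.2 fun j =>
    let ⟨e⟩ := (P.merge Q).nonempty_paddedFactor_torsionPart m j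
    let ⟨e₁⟩ := P.nonempty_paddedFactor_merge Q j
    let ⟨e₂⟩ := nonempty_torsionBy_prod_addEquiv_left (hP ▸ P.card_paddedFactor_dvd_order j)
      (Nat.Coprime.coprime_dvd_left (hQ ▸ Q.card_paddedFactor_dvd_order j) hmn.symm)
    ⟨e.trans ((e₁.torsionByCongr m).trans e₂)⟩

theorem torsionPart_merge_equiv_right (hmn : m.Coprime n) (hP : P.order = m)
    (hQ : Q.order = n) : ((P.merge Q).torsionPart n).Equiv Q :=
  equiv_iff_nonempty_paddedFactor.2 fun j =>
    let ⟨e⟩ := (P.merge Q).nonempty_paddedFactor_torsionPart n j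
    let ⟨e₁⟩ := P.nonempty_paddedFactor_merge Q j
    let ⟨e₂⟩ := nonempty_torsionBy_prod_addEquiv_right
      (Nat.Coprime.coprime_dvd_left (hP ▸ P.card_paddedFactor_dvd_order j) hmn)
      (hQ ▸ Q.card_paddedFactor_dvd_order j)
    ⟨e.trans ((e₁.torsionByCongr n).trans e₂)⟩

theorem coprime_order_torsionPart (hmn : m.Coprime n) : (P.torsionPart m).order.Coprime n :=
  Nat.Coprime.prod_left fun _ _ => coprime_card_torsionBy hmn

theorem order_torsionPart (hmn : m.Coprime n) (hP : P.order = m * n) :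
    (P.torsionPart m).order = m := by
  have hprod := (merge_torsionPart_equiv hmn hP).order_eq
  rw [order_merge, hP] at hprod
  exact Nat.dvd_antisymm
    ((coprime_order_torsionPart hmn).dvd_of_dvd_mul_right ⟨_, hprod.symm⟩)
    ((coprime_order_torsionPart hmn.symm).symm.dvd_of_dvd_mul_right ⟨n, hprod⟩)

end AbGroupPartition

section Counting

open AbGroupPartition

variable (r : ℕ∞)

def PartitionsOfOrder (N : ℕ) : Type 1 :=
  {P : AbGroupPartition // P.order = N ∧ (P.len : ℕ∞) ≤ r}

def IsoClassesOfOrder (N : ℕ) : Type 1 :=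
  Quot fun P Q : PartitionsOfOrder r N => P.1.Equiv Q.1

variable {r} {m n : ℕ}

noncomputable def PartitionsOfOrder.torsionPart {N : ℕ} (hmn : m.Coprime n) (hN : N = m * n)
    (P : PartitionsOfOrder r N) : PartitionsOfOrder r m :=
  ⟨P.1.torsionPart m, order_torsionPart hmn (P.2.1.trans hN),
    (Nat.cast_le.2 (P.1.len_torsionPart_le m)).trans P.2.2⟩

noncomputable def PartitionsOfOrder.merge (P : PartitionsOfOrder r m)
    (Q : PartitionsOfOrder r n) : PartitionsOfOrder r (m * n) :=
  ⟨P.1.merge Q.1, by rw [order_merge, P.2.1, Q.2.1],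
    (Nat.cast_le.2 (P.1.len_merge_le Q.1)).trans
      (Nat.mono_cast.map_max.trans_le (max_le P.2.2 Q.2.2))⟩

noncomputable def isoClassesOfOrderMulEquiv (hmn : m.Coprime n) :
    IsoClassesOfOrder r (m * n) ≃ IsoClassesOfOrder r m × IsoClassesOfOrder r n where
  toFun q := (Quot.map (.torsionPart hmn rfl) (fun _ _ h => h.torsionPart) q,
    Quot.map (.torsionPart hmn.symm (mul_comm m n)) (fun _ _ h => h.torsionPart) q)
  invFun p := Quot.map₂ PartitionsOfOrder.merge (fun P _ _ h => (equiv_refl P.1).merge h)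
    (fun _ _ Q h => h.merge (equiv_refl Q.1)) p.1 p.2
  left_inv := Quot.ind fun P => Quot.sound (merge_torsionPart_equiv hmn P.2.1)
  right_inv := by
    rintro ⟨⟨P⟩, ⟨Q⟩⟩
    exact Prod.ext (Quot.sound (torsionPart_merge_equiv_left hmn P.2.1 Q.2.1))
      (Quot.sound (torsionPart_merge_equiv_right hmn P.2.1 Q.2.1))

end Counting

theorem abelianCount_multiplicative_general (r : ℕ∞) (m n : ℕ) (h : Nat.Coprime m n) :
    abelianCount r (m * n) = abelianCount r m * abelianCount r n := by
  show Nat.card (IsoClassesOfOrder r (m * n)) =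
    Nat.card (IsoClassesOfOrder r m) * Nat.card (IsoClassesOfOrder r n)
  rw [Nat.card_congr (isoClassesOfOrderMulEquiv h), Nat.card_prod]

/-- The arithmetic function `a_r` is multiplicative: `a_r(mn) = a_r(m)·a_r(n)` for coprime
positive integers `m, n`, for `r` a positive integer or `r = ⊤`. -/
theorem abelianCount_multiplicative (r : ℕ∞) (hr : r ≠ 0) (m n : ℕ) (hm : 0 < m) (hn : 0 < n)
    (h : Nat.Coprime m n) :
    abelianCount r (m * n) = abelianCount r m * abelianCount r n :=
  abelianCount_multiplicative_general r m n h
end
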